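/- arXiv:math/0106151 — 5 statements merged into one kernel-verified Lean document; each statement's English description precedes it below -/
import Mathlib

section
/- Suppose Q : ℝ^n → ℝ is a convex function with nonempty solution set S = argmin of Q over the polyhedron {x : Ax = b, x ≥ 0}, having a weak sharp minimum: Q(x) - Q* ≥ ε̂ ‖x - P(x)‖_∞ for all feasible x, where P is the projection onto S and Q* the optimal value. Let m be a convex underestimate of Q with m(x̂) = Q(x̂) for a feasible point x̂ ∉ S, and let x⁺ minimize m over the feasible set intersected with {x : ‖x - x̂‖_∞ ≤ Δ}. Then Q(x̂) - m(x⁺) ≥ min(Δ, ‖x̂ - P(x̂)‖_∞) · (Q(x̂) - Q*) / ‖x̂ - P(x̂)‖_∞ ≥ ε̂ · min(Δ, ‖x̂ - P(x̂)‖_∞). -/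
/-- Model decrease lower bound under a weak sharp minimum
(Lemma 3.2 of the paper).  The norm on `Fin n → ℝ` is the sup (ℓ∞) norm. -/
theorem stmt2 {n k : ℕ} (A : Matrix (Fin k) (Fin n) ℝ) (b : Fin k → ℝ)
    (Q : (Fin n → ℝ) → ℝ)
    (hQconv : ConvexOn ℝ {x | A.mulVec x = b ∧ 0 ≤ x} Q)
    (S : Set (Fin n → ℝ))
    (hS : S = {x | (A.mulVec x = b ∧ 0 ≤ x) ∧
      ∀ y, A.mulVec y = b ∧ 0 ≤ y → Q x ≤ Q y})
    (hSne : S.Nonempty)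
    (P : (Fin n → ℝ) → (Fin n → ℝ))
    (hP : ∀ x, P x ∈ S ∧ ∀ s ∈ S, ‖x - P x‖ ≤ ‖x - s‖)
    (Qstar : ℝ) (hQstar : ∀ s ∈ S, Q s = Qstar)
    (epshat : ℝ) (hε : 0 < epshat)
    (hws : ∀ x, A.mulVec x = b ∧ 0 ≤ x → Q x - Qstar ≥ epshat * ‖x - P x‖)
    (m : (Fin n → ℝ) → ℝ)
    (hmconv : ConvexOn ℝ {x | A.mulVec x = b ∧ 0 ≤ x} m)
    (hmQ : ∀ x, A.mulVec x = b ∧ 0 ≤ x → m x ≤ Q x)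
    (xhat : Fin n → ℝ) (hxhat : A.mulVec xhat = b ∧ 0 ≤ xhat) (hxhatS : xhat ∉ S)
    (hmxhat : m xhat = Q xhat)
    (Δ : ℝ) (hΔ : 0 < Δ)
    (xp : Fin n → ℝ)
    (hxpf : (A.mulVec xp = b ∧ 0 ≤ xp) ∧ ‖xp - xhat‖ ≤ Δ)
    (hxp : IsMinOn m {x | (A.mulVec x = b ∧ 0 ≤ x) ∧ ‖x - xhat‖ ≤ Δ} xp) :
    Q xhat - m xp ≥ min Δ ‖xhat - P xhat‖ * (Q xhat - Qstar) / ‖xhat - P xhat‖ ∧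
    min Δ ‖xhat - P xhat‖ * (Q xhat - Qstar) / ‖xhat - P xhat‖ ≥
      epshat * min Δ ‖xhat - P xhat‖ := by
  set p := P xhat with hp
  have hpS : p ∈ S := (hP xhat).1
  obtain ⟨hpF, hpmin⟩ : (A.mulVec p = b ∧ 0 ≤ p) ∧
      ∀ y, A.mulVec y = b ∧ 0 ≤ y → Q p ≤ Q y := by rw [hS] at hpS; exact hpS
  have hQp : Q p = Qstar := hQstar p hpS
  have hne : xhat ≠ p := by
    intro h; exact hxhatS (h ▸ hpS)
  have hd : (0:ℝ) < ‖xhat - p‖ := by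
    rw [norm_pos_iff]; exact sub_ne_zero.mpr hne
  set d := ‖xhat - p‖ with hdd
  set lam := min Δ d / d with hlam
  have hlam0 : 0 < lam := div_pos (lt_min hΔ hd) hd
  have hlam1 : lam ≤ 1 := by
    rw [hlam, div_le_one hd]; exact min_le_right _ _
  set y := (1 - lam) • xhat + lam • p with hy
  have hconvF : Convex ℝ {x | A.mulVec x = b ∧ 0 ≤ x} := hmconv.1
  have hyF : A.mulVec y = b ∧ 0 ≤ y :=
    hconvF hxhat hpF (by linarith) hlam0.le (by ring)
  have hynorm : ‖y - xhat‖ = min Δ d := by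
    have : y - xhat = lam • (p - xhat) := by
      rw [hy]; module
    rw [this, norm_smul, Real.norm_eq_abs, abs_of_pos hlam0, norm_sub_rev,
      ← hdd, hlam, div_mul_cancel₀ _ hd.ne']
  have hymem : y ∈ {x | (A.mulVec x = b ∧ 0 ≤ x) ∧ ‖x - xhat‖ ≤ Δ} :=
    ⟨hyF, by rw [hynorm]; exact min_le_left _ _⟩
  have h1 : m xp ≤ m y := hxp hymem
  have h2 : m y ≤ (1 - lam) * m xhat + lam * m p :=
    hmconv.2 hxhat hpF (by linarith) hlam0.le (by ring)
  have h3 : m p ≤ Qstar := hQp ▸ hmQ p hpF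
  have h4 : Q xhat - m xp ≥ lam * (Q xhat - Qstar) := by
    have := hmxhat
    nlinarith [h1, h2, h3, hlam0.le]
  have hQge : Q xhat - Qstar ≥ epshat * d := hws xhat hxhat
  constructor
  · calc min Δ d * (Q xhat - Qstar) / d = lam * (Q xhat - Qstar) := by
          rw [hlam]; ring
      _ ≤ Q xhat - m xp := h4
  · rw [ge_iff_le, mul_comm epshat, div_eq_mul_inv, mul_assoc]
    apply mul_le_mul_of_nonneg_left _ (le_min hΔ.le hd.le)
    rw [← div_eq_mul_inv, le_div_iff₀ hd]
    linarith
end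

section
/- In the context of the cutting-plane model, suppose x^{k,ℓ} solves min m_{k,ℓ}(x) subject to x ∈ F and ‖x - x^k‖_∞ ≤ Δ_{k,ℓ}, where all constraints active at x^{k,ℓ} are retained in m_{k,ℓ+1}, only additional cuts (lower-bounding affine functions of Q) are added, and Δ_{k,ℓ+1} ≤ Δ_{k,ℓ}. Then m_{k,ℓ}(x^{k,ℓ}) ≤ m_{k,ℓ+1}(x^{k,ℓ+1}) where x^{k,ℓ+1} solves the next subproblem. -/
open Finset

def dotp {n : ℕ} (g x : Fin n → ℝ) : ℝ := ∑ i, g i * x i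

/-!
At `x¹` the model agrees, on a neighbourhood, with the model `m̂` built only from the cuts active
at `x¹`, since every inactive cut stays strictly below the maximum nearby. Being a local minimiser
of the convex function `m̂` on the convex set `F ∩ {‖x - xᵏ‖ ≤ Δ₁}`, the point `x¹` is a global
one, and `x²` lies in that set because the radius shrinks. As the next model keeps all active
cuts, `m₁(x¹) = m̂(x¹) ≤ m̂(x²) ≤ m₂(x²)`.
-/

open Filter Topology

section ConvexOn

variable {𝕜 E β ι : Type*} [Semiring 𝕜] [PartialOrder 𝕜] [AddCommMonoid E] [SMul 𝕜 E]
  [AddCommMonoid β] [Module 𝕜 β] {s : Set E}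

theorem ConvexOn.finset_sum [PartialOrder β] [IsOrderedAddMonoid β] [PosSMulMono 𝕜 β]
    {f : ι → E → β} (t : Finset ι) (hs : Convex 𝕜 s) (hf : ∀ i ∈ t, ConvexOn 𝕜 s (f i)) :
    ConvexOn 𝕜 s fun x => ∑ i ∈ t, f i x := by
  classical
  induction t using Finset.induction_on with
  | empty => simpa using convexOn_const (0 : β) hs
  | insert i t hi ih =>
    simp only [Finset.sum_insert hi]
    exact (hf i (mem_insert_self i t)).add (ih fun j hj => hf j (mem_insert_of_mem hj))

theorem ConvexOn.finset_sup' [LinearOrder β] [IsOrderedAddMonoid β] [PosSMulMono 𝕜 β]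
    {f : ι → E → β} {t : Finset ι} (ht : t.Nonempty) (hs : Convex 𝕜 s)
    (hf : ∀ i ∈ t, ConvexOn 𝕜 s (f i)) :
    ConvexOn 𝕜 s fun x => t.sup' ht (f · x) :=
  ⟨hs, fun x hx y hy _ _ ha hb hab => sup'_le _ _ fun i hi =>
    ((hf i hi).2 hx hy ha hb hab).trans <|
      add_le_add (smul_le_smul_of_nonneg_left (le_sup' (f · x) hi) ha)
        (smul_le_smul_of_nonneg_left (le_sup' (f · y) hi) hb)⟩

end ConvexOn

namespace Finset

variable {ι α β : Type*} [LinearOrder β]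

def activeAt (s : Finset ι) (hs : s.Nonempty) (f : ι → α → β) (a : α) : Finset ι :=
  s.filter fun i => f i a = s.sup' hs (f · a)

theorem activeAt_subset (s : Finset ι) (hs : s.Nonempty) (f : ι → α → β) (a : α) :
    s.activeAt hs f a ⊆ s :=
  filter_subset _ _

theorem activeAt_nonempty (s : Finset ι) (hs : s.Nonempty) (f : ι → α → β) (a : α) :
    (s.activeAt hs f a).Nonempty := by
  obtain ⟨i, hi, hia⟩ := exists_mem_eq_sup' hs (f · a)
  exact ⟨i, mem_filter.2 ⟨hi, hia.symm⟩⟩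

theorem eventually_sup'_eq_sup'_activeAt [TopologicalSpace α] [TopologicalSpace β]
    [OrderClosedTopology β] {s : Finset ι} (hs : s.Nonempty) {f : ι → α → β} {a : α}
    (hf : ∀ i ∈ s, ContinuousAt (f i) a) :
    ∀ᶠ x in 𝓝 a,
      s.sup' hs (f · x) = (s.activeAt hs f a).sup' (s.activeAt_nonempty hs f a) (f · x) := by
  obtain ⟨i₀, hi₀⟩ := s.activeAt_nonempty hs f a
  obtain ⟨hi₀s, hi₀a⟩ := mem_filter.1 hi₀
  have below_active : ∀ i ∈ s, ∀ᶠ x in 𝓝 a,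
      f i x ≤ (s.activeAt hs f a).sup' (s.activeAt_nonempty hs f a) (f · x) := by
    intro i hi
    by_cases hia : f i a = s.sup' hs (f · a)
    · exact .of_forall fun x => le_sup' (f · x) (mem_filter.2 ⟨hi, hia⟩)
    · have hlt : f i a < f i₀ a := hi₀a ▸ lt_of_le_of_ne (le_sup' (f · a) hi) hia
      filter_upwards [(hf i hi).eventually_lt (hf i₀ hi₀s) hlt] with x hx
      exact hx.le.trans (le_sup' (f · x) hi₀)
  filter_upwards [(eventually_all_finset s).2 below_active] with x hx
  exact le_antisymm (sup'_le _ _ hx) (sup'_mono _ (activeAt_subset s hs f a) _)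

end Finset

theorem Matrix.convex_setOf_mulVec_eq_and_nonneg {m n : Type*} [Fintype n]
    (A : Matrix m n ℝ) (b : m → ℝ) : Convex ℝ {x | A.mulVec x = b ∧ 0 ≤ x} :=
  ((convex_singleton b).linear_preimage A.mulVecLin).inter (convex_Ici 0)

theorem Convex.sep_norm_sub_le {E : Type*} [NormedAddCommGroup E] [NormedSpace ℝ E]
    {F : Set E} (hF : Convex ℝ F) (c : E) (r : ℝ) : Convex ℝ {x ∈ F | ‖x - c‖ ≤ r} := by
  have h := hF.inter (convex_closedBall c r)
  simp only [Metric.closedBall, dist_eq_norm] at h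
  exact h

section CutModel

variable {n T : ℕ}

def cut (ab : (Fin n → ℝ) × ℝ) (x : Fin n → ℝ) : ℝ := dotp ab.1 x + ab.2

theorem continuous_cut (ab : (Fin n → ℝ) × ℝ) : Continuous (cut ab) := by
  unfold cut dotp
  fun_prop

theorem convexOn_dotp (g : Fin n → ℝ) : ConvexOn ℝ Set.univ (dotp g) :=
  (dotProductBilin ℝ ℝ g).convexOn convex_univ

theorem convexOn_cut (ab : (Fin n → ℝ) × ℝ) : ConvexOn ℝ Set.univ (cut ab) :=
  (convexOn_dotp ab.1).add_const ab.2

noncomputable def cutModel (c : Fin n → ℝ) (cuts : Fin T → Finset ((Fin n → ℝ) × ℝ))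
    (h : ∀ j, (cuts j).Nonempty) (x : Fin n → ℝ) : ℝ :=
  dotp c x + ∑ j, (cuts j).sup' (h j) (cut · x)

variable (c : Fin n → ℝ) {cuts cuts' : Fin T → Finset ((Fin n → ℝ) × ℝ)}
  (h : ∀ j, (cuts j).Nonempty) (h' : ∀ j, (cuts' j).Nonempty)

theorem convexOn_cutModel : ConvexOn ℝ Set.univ (cutModel c cuts h) :=
  (convexOn_dotp c).add <| ConvexOn.finset_sum univ convex_univ fun j _ =>
    ConvexOn.finset_sup' (h j) convex_univ fun ab _ => convexOn_cut ab

theorem cutModel_mono (hsub : ∀ j, cuts j ⊆ cuts' j) (x : Fin n → ℝ) :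
    cutModel c cuts h x ≤ cutModel c cuts' h' x :=
  add_le_add_right (sum_le_sum fun j _ => sup'_mono _ (hsub j) _) _

noncomputable def activeCutModel (a : Fin n → ℝ) : (Fin n → ℝ) → ℝ :=
  cutModel c (fun j => (cuts j).activeAt (h j) cut a)
    (fun j => (cuts j).activeAt_nonempty (h j) cut a)

theorem cutModel_eventuallyEq_activeCutModel (a : Fin n → ℝ) :
    cutModel c cuts h =ᶠ[𝓝 a] activeCutModel c h a := by
  have hj := fun j => (cuts j).eventually_sup'_eq_sup'_activeAt (h j) (a := a)
    fun ab _ => (continuous_cut ab).continuousAt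
  filter_upwards [eventually_all.2 hj] with x hx
  exact congrArg (dotp c x + ·) (sum_congr rfl fun j _ => hx j)

theorem cutModel_le_of_isMinOn {S : Set (Fin n → ℝ)} (hS : Convex ℝ S) {x₁ x₂ : Fin n → ℝ}
    (hx₁ : x₁ ∈ S) (hmin : IsMinOn (cutModel c cuts h) S x₁) (hx₂ : x₂ ∈ S)
    (hactive : ∀ j, (cuts j).activeAt (h j) cut x₁ ⊆ cuts' j) :
    cutModel c cuts h x₁ ≤ cutModel c cuts' h' x₂ := by
  have hloc := cutModel_eventuallyEq_activeCutModel c h x₁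
  have hmin' : IsMinOn (activeCutModel c h x₁) S x₁ :=
    .of_isLocalMinOn_of_convexOn hx₁
      (hmin.localize.congr (nhdsWithin_le_nhds hloc) hx₁)
      ((convexOn_cutModel c _).subset (Set.subset_univ S) hS)
  calc cutModel c cuts h x₁ = activeCutModel c h x₁ x₁ := hloc.eq_of_nhds
    _ ≤ activeCutModel c h x₁ x₂ := hmin' hx₂
    _ ≤ cutModel c cuts' h' x₂ := cutModel_mono c _ h' hactive x₂

end CutModel

theorem stmt8_general {n T : ℕ}
    (c : Fin n → ℝ) (F : Set (Fin n → ℝ)) (hFpoly : ∃ (k : ℕ)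
      (A : Matrix (Fin k) (Fin n) ℝ) (b : Fin k → ℝ),
      F = {x | A.mulVec x = b ∧ 0 ≤ x})
    (xk : Fin n → ℝ)
    (cuts1 cuts2 : Fin T → Finset ((Fin n → ℝ) × ℝ))
    (h1 : ∀ j, (cuts1 j).Nonempty) (h2 : ∀ j, (cuts2 j).Nonempty)
    (m1 m2 : (Fin n → ℝ) → ℝ)
    (hm1 : ∀ x, m1 x = dotp c x +
      ∑ j, (cuts1 j).sup' (h1 j) (fun ab => dotp ab.1 x + ab.2))
    (hm2 : ∀ x, m2 x = dotp c x +
      ∑ j, (cuts2 j).sup' (h2 j) (fun ab => dotp ab.1 x + ab.2))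
    (Δ1 Δ2 : ℝ) (hΔ : Δ2 ≤ Δ1)
    (x1 x2 : Fin n → ℝ)
    (hx1f : x1 ∈ F ∧ ‖x1 - xk‖ ≤ Δ1)
    (hx1 : IsMinOn m1 {x ∈ F | ‖x - xk‖ ≤ Δ1} x1)
    (hx2f : x2 ∈ F ∧ ‖x2 - xk‖ ≤ Δ2)
    (hactive : ∀ j, ∀ ab ∈ cuts1 j,
      dotp ab.1 x1 + ab.2 =
        (cuts1 j).sup' (h1 j) (fun ab => dotp ab.1 x1 + ab.2) →
      ab ∈ cuts2 j) :
    m1 x1 ≤ m2 x2 := by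
  obtain ⟨k, A, b, rfl⟩ := hFpoly
  have hm1' : m1 = cutModel c cuts1 h1 := funext hm1
  have hm2' : m2 = cutModel c cuts2 h2 := funext hm2
  subst hm1' hm2'
  refine cutModel_le_of_isMinOn c h1 h2
    ((Matrix.convex_setOf_mulVec_eq_and_nonneg A b).sep_norm_sub_le xk Δ1) hx1f hx1
    ⟨hx2f.1, hx2f.2.trans hΔ⟩ fun j ab hab => ?_
  obtain ⟨hab_mem, hab_max⟩ := mem_filter.1 hab
  exact hactive j ab hab_mem hab_max

/-- Monotonicity of cutting-plane model optimal values between minor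
iterations (Lemma 3.1):  all cuts active at the current minor iterate are
retained, only cuts are added, and the trust radius shrinks.
Models have the form `c^T x + Σ_j max_{(a,b) ∈ cuts j} (a^T x + b)`.
Sup norm on `Fin n → ℝ`. -/
theorem stmt8 {n T : ℕ}
    (c : Fin n → ℝ) (F : Set (Fin n → ℝ)) (hFpoly : ∃ (k : ℕ)
      (A : Matrix (Fin k) (Fin n) ℝ) (b : Fin k → ℝ),
      F = {x | A.mulVec x = b ∧ 0 ≤ x})
    (xk : Fin n → ℝ)
    (cuts1 cuts2 : Fin T → Finset ((Fin n → ℝ) × ℝ))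
    (h1 : ∀ j, (cuts1 j).Nonempty) (h2 : ∀ j, (cuts2 j).Nonempty)
    (m1 m2 : (Fin n → ℝ) → ℝ)
    (hm1 : ∀ x, m1 x = dotp c x +
      ∑ j, (cuts1 j).sup' (h1 j) (fun ab => dotp ab.1 x + ab.2))
    (hm2 : ∀ x, m2 x = dotp c x +
      ∑ j, (cuts2 j).sup' (h2 j) (fun ab => dotp ab.1 x + ab.2))
    (Δ1 Δ2 : ℝ) (hΔ : Δ2 ≤ Δ1)
    (x1 x2 : Fin n → ℝ)
    (hx1f : x1 ∈ F ∧ ‖x1 - xk‖ ≤ Δ1)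
    (hx1 : IsMinOn m1 {x ∈ F | ‖x - xk‖ ≤ Δ1} x1)
    (hx2f : x2 ∈ F ∧ ‖x2 - xk‖ ≤ Δ2)
    (hx2 : IsMinOn m2 {x ∈ F | ‖x - xk‖ ≤ Δ2} x2)
    (hactive : ∀ j, ∀ ab ∈ cuts1 j,
      dotp ab.1 x1 + ab.2 =
        (cuts1 j).sup' (h1 j) (fun ab => dotp ab.1 x1 + ab.2) →
      ab ∈ cuts2 j) :
    m1 x1 ≤ m2 x2 :=
  stmt8_general c F hFpoly xk cuts1 cuts2 h1 h2 m1 m2 hm1 hm2 Δ1 Δ2 hΔ x1 x2 hx1f hx1 hx2f hactive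
end

section
/- Fix ε̂ > 0, β > 0, Δ_init > 0. Consider a sequence of trust-region radii generated by the rule: each Δ may be reduced by at most a factor of 4 at each reduction step, and a reduction from radius Δ' can only occur if Q(y) - Q(x) > (1/min(1,Δ'))·(Q(x) - m(y)) where Q(x) - m(y) ≥ ε̂ min(Δ', d), d > 0 is a fixed lower bound on distances of iterates to the solution set, and Q(y) - Q(x) ≤ β Δ' (Lipschitz-type bound via subgradients). Then every radius in the sequence satisfies Δ ≥ (1/4) min(1, Δ_init, ε̂/β, d). -/
/-- Lower bound on trust-region radii (abstraction of Lemma 3.3):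
a reduction divides the radius by at most 4 and can only fire when the
stated ratio condition holds; then every radius stays above
`(1/4) min(1, Δ_init, epshat/β, d)`. -/
theorem stmt9 (epshat β Δinit d : ℝ)
    (hε : 0 < epshat) (hβ : 0 < β) (hΔinit : 0 < Δinit) (hd : 0 < d)
    (Δ : ℕ → ℝ) (hΔpos : ∀ t, 0 < Δ t) (hΔ0 : Δ 0 = Δinit)
    (hstep : ∀ t, Δ (t + 1) = Δ t ∨
      (Δ t / 4 ≤ Δ (t + 1) ∧ Δ (t + 1) < Δ t ∧
        ∃ qx my qy : ℝ,
          qy - qx > (1 / min 1 (Δ t)) * (qx - my) ∧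
          qx - my ≥ epshat * min (Δ t) d ∧
          qy - qx ≤ β * Δ t)) :
    ∀ t, Δ t ≥ (1 / 4) * min (min 1 Δinit) (min (epshat / β) d) := by
  set M : ℝ := min (min 1 Δinit) (min (epshat / β) d) with hM
  have hM1 : M ≤ 1 := le_trans (min_le_left _ _) (min_le_left _ _)
  have hMinit : M ≤ Δinit := le_trans (min_le_left _ _) (min_le_right _ _)
  have hMεβ : M ≤ epshat / β := le_trans (min_le_right _ _) (min_le_left _ _)
  have hMd : M ≤ d := le_trans (min_le_right _ _) (min_le_right _ _)
  intro t
  induction t with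
  | zero =>
    rw [hΔ0]
    nlinarith
  | succ t ih =>
    rcases hstep t with h | ⟨h14, hlt, qx, my, qy, hratio, hsharp, hlip⟩
    · rw [h]; exact ih
    · -- if Δ t ≥ M we're done via Δ t / 4
      rcases le_or_gt M (Δ t) with hMt | hMt
      · have : M / 4 ≤ Δ t / 4 := by linarith
        calc (1/4) * M = M / 4 := by ring
          _ ≤ Δ t / 4 := this
          _ ≤ Δ (t+1) := h14
      · -- contradiction
        exfalso
        have ht1 : Δ t < 1 := lt_of_lt_of_le hMt hM1
        have htd : Δ t < d := lt_of_lt_of_le hMt hMd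
        have htεβ : Δ t < epshat / β := lt_of_lt_of_le hMt hMεβ
        have hmin1 : min 1 (Δ t) = Δ t := min_eq_right ht1.le
        have hmind : min (Δ t) d = Δ t := min_eq_left htd.le
        rw [hmin1] at hratio
        rw [hmind] at hsharp
        have hpos := hΔpos t
        have h1 : (1 / Δ t) * (qx - my) ≥ (1 / Δ t) * (epshat * Δ t) := by
          apply mul_le_mul_of_nonneg_left hsharp
          positivity
        have h2 : (1 / Δ t) * (epshat * Δ t) = epshat := by
          field_simp
        have h3 : qy - qx > epshat := by
          rw [h2] at h1; linarith
        have h4 : β * Δ t < epshat := by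
          rw [lt_div_iff₀ hβ] at htεβ; linarith
        linarith
end

section
/- Let Q, m be convex on ℝ^n with m ≤ Q, and suppose m(x^{k,ℓ}) = Q(x^{k,ℓ}) at a point x^{k,ℓ} where the acceptance test fails: Q(x^{k,ℓ}) > Q(x^k) - ξ(Q(x^k) - m_ℓ*) with m_ℓ* ≤ m(x^{k,ℓ}) being a lower model value. If all subgradients of m at x^{k,ℓ} have ℓ₁-norm at most β, then for every x with ‖x - x^{k,ℓ}‖_∞ ≤ (η̄ - ξ)(Q(x^k) - m̄)/β (where m̄ ≤ m_ℓ*, ξ < η̄), we have Q(x^k) - m(x) ≤ η̄ (Q(x^k) - m̄). -/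
open Finset

def SubdiffAt {n : ℕ} (f : (Fin n → ℝ) → ℝ) (x : Fin n → ℝ) : Set (Fin n → ℝ) :=
  {g | ∀ y, f y - f x ≥ dotp g (y - x)}

def l1norm {n : ℕ} (g : Fin n → ℝ) : ℝ := ∑ i, |g i|

lemma exists_subgrad {n : ℕ} (m : (Fin n → ℝ) → ℝ) (hm : ConvexOn ℝ Set.univ m)
    (x₀ : Fin n → ℝ) : ∃ g, g ∈ SubdiffAt m x₀ := by
  have hcont : Continuous m := by
    exact continuousOn_univ.mp (hm.continuousOn isOpen_univ)
  set S : Set ((Fin n → ℝ) × ℝ) := {p | m p.1 < p.2} with hS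
  have hopen : IsOpen S := isOpen_lt (hcont.comp continuous_fst) continuous_snd
  have hconv : Convex ℝ S := by
    rintro ⟨x, s⟩ hx ⟨y, t⟩ hy a b ha hb hab
    simp only [hS, Set.mem_setOf_eq] at hx hy ⊢
    have h1 : m (a • x + b • y) ≤ a * m x + b * m y :=
      hm.2 (Set.mem_univ x) (Set.mem_univ y) ha hb hab
    have : a * m x + b * m y < a * s + b * t := by
      rcases ha.lt_or_eq with ha' | ha'
      · have h2 : a * m x < a * s := by nlinarith
        have h3 : b * m y ≤ b * t := by nlinarith
        linarith
      · have hb' : 0 < b := by linarith [ha'.symm ▸ hab]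
        have h2 : b * m y < b * t := by nlinarith
        have h3 : a * m x ≤ a * s := by nlinarith
        linarith
    calc m (a • x + b • y) ≤ a * m x + b * m y := h1
      _ < a * s + b * t := this
      _ = (a • (x, s) + b • (y, t)).2 := by simp
  have hnotmem : ((x₀, m x₀) : (Fin n → ℝ) × ℝ) ∉ S := by
    simp [hS]
  obtain ⟨f, hf⟩ := geometric_hahn_banach_point_open hconv hopen hnotmem
  -- f (x₀, m x₀) < f p for all p with m p.1 < p.2
  set a : ℝ := f (0, 1) with ha
  have hsplit : ∀ (y : Fin n → ℝ) (t : ℝ), f (y, t) = f (y, 0) + t * a := by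
    intro y t
    have : ((y, t) : (Fin n → ℝ) × ℝ) = (y, 0) + t • (0, 1) := by
      simp [Prod.ext_iff]
    rw [this, map_add, map_smul]
    simp [ha, smul_eq_mul]
  have hapos : 0 < a := by
    have := hf (x₀, m x₀ + 1) (by simp [hS])
    rw [hsplit x₀ (m x₀ + 1), hsplit x₀ (m x₀)] at this
    linarith
  have hkey : ∀ y : Fin n → ℝ, f (x₀, 0) + m x₀ * a ≤ f (y, 0) + m y * a := by
    intro y
    by_contra h
    push_neg at h
    set ε : ℝ := (f (x₀, 0) + m x₀ * a - (f (y, 0) + m y * a)) / a with hε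
    have hεpos : 0 < ε := div_pos (by linarith) hapos
    have := hf (y, m y + ε) (by simp [hS, hεpos])
    rw [hsplit y (m y + ε), hsplit x₀ (m x₀)] at this
    have : f (x₀, 0) + m x₀ * a < f (y, 0) + m y * a + ε * a := by linarith
    rw [hε, div_mul_cancel₀ _ (ne_of_gt hapos)] at this
    linarith
  -- linear part
  set L : (Fin n → ℝ) →ₗ[ℝ] ℝ := (f.comp (ContinuousLinearMap.inl ℝ (Fin n → ℝ) ℝ)).toLinearMap
    with hL
  have hLapp : ∀ y, L y = f (y, 0) := fun y => rfl
  refine ⟨fun i => -(L (fun j => if i = j then 1 else 0)) / a, fun y => ?_⟩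
  have hdot : dotp (fun i => -(L (fun j => if i = j then 1 else 0)) / a) (y - x₀)
      = (L x₀ - L y) / a := by
    rw [LinearMap.pi_apply_eq_sum_univ L x₀, LinearMap.pi_apply_eq_sum_univ L y]
    unfold dotp
    rw [← Finset.sum_sub_distrib, Finset.sum_div]
    apply Finset.sum_congr rfl
    intro i _
    simp only [Pi.sub_apply, smul_eq_mul]
    ring
  rw [hdot, hLapp, hLapp, ge_iff_le, div_le_iff₀ hapos]
  have := hkey y
  nlinarith
lemma dotp_abs_le {n : ℕ} (g v : Fin n → ℝ) : |dotp g v| ≤ l1norm g * ‖v‖ := by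
  unfold dotp l1norm
  calc |∑ i, g i * v i| ≤ ∑ i, |g i * v i| := Finset.abs_sum_le_sum_abs _ _
    _ ≤ ∑ i, |g i| * ‖v‖ := by
        apply Finset.sum_le_sum
        intro i _
        rw [abs_mul]
        exact mul_le_mul_of_nonneg_left
          (by simpa [Real.norm_eq_abs] using norm_le_pi_norm v i) (abs_nonneg _)
    _ = (∑ i, |g i|) * ‖v‖ := by rw [← Finset.sum_mul]

/-- Neighborhood estimate from Lemma 3.4: around a rejected minor iterate,
the model gap stays below `etabar (Q(x^k) - mbar)`.  Sup norm on `Fin n → ℝ`. -/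
theorem stmt11 {n : ℕ} (Q m : (Fin n → ℝ) → ℝ)
    (hQ : ConvexOn ℝ Set.univ Q) (hm : ConvexOn ℝ Set.univ m)
    (hle : ∀ x, m x ≤ Q x)
    (xk xkl : Fin n → ℝ) (heq : m xkl = Q xkl)
    (ξ etabar : ℝ) (hξ : 0 < ξ) (hξη : ξ < etabar) (hetabar : etabar < 1)
    (mstar mbar : ℝ) (hmbarle : mbar ≤ mstar) (hmstarle : mstar ≤ m xkl)
    (hgap : 0 < Q xk - mbar)
    (hfail : Q xkl > Q xk - ξ * (Q xk - mstar))
    (β : ℝ) (hβ : 0 < β)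
    (hbound : ∀ g ∈ SubdiffAt m xkl, l1norm g ≤ β) :
    ∀ x, ‖x - xkl‖ ≤ (etabar - ξ) * (Q xk - mbar) / β →
      Q xk - m x ≤ etabar * (Q xk - mbar) := by
  intro x hx
  obtain ⟨g, hg⟩ := exists_subgrad m hm xkl
  have hgb := hbound g hg
  -- first inequality: Q xk - m xkl ≤ ξ (Q xk - mbar)
  have h1 : Q xk - m xkl ≤ ξ * (Q xk - mbar) := by
    have : ξ * (Q xk - mstar) ≤ ξ * (Q xk - mbar) := by nlinarith
    rw [heq]; linarith
  -- second: m xkl - m x ≤ β * ‖x - xkl‖ ≤ (etabar - ξ)(Q xk - mbar)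
  have hsub := hg x
  have habs := dotp_abs_le g (x - xkl)
  have hnn : (0:ℝ) ≤ ‖x - xkl‖ := norm_nonneg _
  have h2 : m xkl - m x ≤ β * ‖x - xkl‖ := by
    have : -(l1norm g * ‖x - xkl‖) ≤ dotp g (x - xkl) := neg_le_of_abs_le habs
    nlinarith
  have h3 : β * ‖x - xkl‖ ≤ (etabar - ξ) * (Q xk - mbar) := by
    rw [le_div_iff₀ hβ] at hx
    nlinarith
  nlinarith
end

section
/- Suppose Q is convex with weak sharp minimum constant ε̂ > 0 over the feasible polyhedron, the acceptance test Q(x^{k+1}) ≤ Q(x^k) - ξ(Q(x^k) - m_k*) holds at every major iteration with model decrease Q(x^k) - m_k* ≥ ε̂ min(Δ_k, ‖x^k - P(x^k)‖_∞), the radii satisfy Δ_k ≥ min(Δ_lo, E_k/4) with E_k = min over k' ≤ k of ‖x^{k'} - P(x^{k'})‖_∞, and Q is bounded below. Then it is impossible that ‖x^{k_j} - P(x^{k_j})‖_∞ ≥ ε > 0 along an infinite subsequence; i.e., ‖x^k - P(x^k)‖_∞ → 0. -/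
/-- Convergence of distances to the solution set (abstraction of
Theorem 3.6): `Qs k = Q(x^k)`, `D k = ‖x^k - P(x^k)‖_∞`, `Δ k` the accepted
trust radii, `E_k = min_{k' ≤ k} D k'`. -/
theorem stmt15 (Qs D Δ : ℕ → ℝ) (Qstar : ℝ)
    (ξ epshat β Δlo : ℝ)
    (hξ0 : 0 < ξ) (hξ1 : ξ < 1 / 2) (hepshat : 0 < epshat) (hβ : 0 < β)
    (hΔlo : 0 < Δlo)
    (hDnn : ∀ k, 0 ≤ D k)
    (hΔpos : ∀ k, 0 < Δ k)
    (hdec : ∀ k, Qs k - Qs (k + 1) ≥ ξ * (epshat * min (Δ k) (D k)))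
    (hws : ∀ k, epshat * D k ≤ Qs k - Qstar)
    (hlip : ∀ k, Qs k - Qstar ≤ β * D k)
    (hΔ : ∀ k, Δ k ≥ min Δlo ((⨅ k' : Fin (k + 1), D k') / 4))
    (hbdd : ∀ k, Qstar ≤ Qs k) :
    Filter.Tendsto D Filter.atTop (nhds 0) := by
  have hmin_nn : ∀ k, 0 ≤ min (Δ k) (D k) := fun k => le_min (hΔpos k).le (hDnn k)
  have hanti : Antitone Qs := antitone_nat_of_succ_le (fun k => by
    have h1 := hdec k
    have h0 : 0 ≤ ξ * (epshat * min (Δ k) (D k)) := by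
      have := hmin_nn k; positivity
    linarith)
  have hbdd' : BddBelow (Set.range D) := ⟨0, by rintro x ⟨k, rfl⟩; exact hDnn k⟩
  set c := ⨅ k, D k with hc
  have hc0 : 0 ≤ c := le_ciInf hDnn
  have hc_eq : c = 0 := by
    by_contra h
    have hcpos : 0 < c := lt_of_le_of_ne hc0 (Ne.symm h)
    set δ := min (min Δlo (c / 4)) c with hδ
    have hδpos : 0 < δ := lt_min (lt_min hΔlo (by linarith)) hcpos
    have hstep : ∀ k, ξ * (epshat * δ) ≤ Qs k - Qs (k + 1) := by
      intro k
      have h1 : c ≤ ⨅ k' : Fin (k + 1), D k' :=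
        le_ciInf fun i => ciInf_le hbdd' (i : ℕ)
      have h2 : min Δlo (c / 4) ≤ Δ k :=
        le_trans (min_le_min le_rfl (by linarith)) (hΔ k)
      have h3 : δ ≤ min (Δ k) (D k) :=
        le_min (le_trans (min_le_left _ _) h2)
          (le_trans (min_le_right _ _) (ciInf_le hbdd' k))
      have h4 := hdec k
      have h5 : ξ * epshat * δ ≤ ξ * epshat * (min (Δ k) (D k)) :=
        mul_le_mul_of_nonneg_left h3 (by positivity)
      linarith
    have htel : ∀ n : ℕ, Qs 0 - n * (ξ * (epshat * δ)) ≥ Qs n := by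
      intro n
      induction n with
      | zero => simp
      | succ n ih =>
        have := hstep n
        push_cast
        push_cast at ih
        linarith
    have hpos : 0 < ξ * (epshat * δ) := by positivity
    obtain ⟨n, hn⟩ := exists_nat_gt ((Qs 0 - Qstar) / (ξ * (epshat * δ)))
    have h5 := htel n
    have h6 := hbdd n
    have h7 : Qs 0 - Qstar < n * (ξ * (epshat * δ)) := by
      rwa [div_lt_iff₀ hpos] at hn
    linarith
  rw [Metric.tendsto_atTop]
  intro ε hε
  have hεβ : 0 < epshat * ε / β := by positivity
  have hlt : c < epshat * ε / β := by rw [hc_eq]; exact hεβ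
  obtain ⟨K, hK⟩ := exists_lt_of_ciInf_lt hlt
  refine ⟨K, fun n hn => ?_⟩
  have h1 : Qs n ≤ Qs K := hanti hn
  have h2 : β * D K < β * (epshat * ε / β) := mul_lt_mul_of_pos_left hK hβ
  have h2' : β * (epshat * ε / β) = epshat * ε := by field_simp
  have h3 := hlip K
  have h4 := hws n
  have hD : D n < ε := by nlinarith
  rw [Real.dist_eq, sub_zero, abs_of_nonneg (hDnn n)]
  exact hD
end
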